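/- Let R_n be the kernel of the mod-n winding number map on F_{s-1}, with the ℤ/nℤ = ⟨σ⟩ action on R_n/R_n' given by conjugation by x_1. Then the subgroup of σ-invariant elements of R_n/R_n' is generated by the classes of x_i^n for 1 ≤ i ≤ s-1. -/

import Mathlib

/-!
Let `x₀` be the generator whose conjugation defines `σ`. The classes of the Schreier generators
`x₀^b x_j x₀^(-(b+1))` of `R_n` depend only on `b mod n` and, with the class of `x₀^n`, generate
`R_n/R_n'`. For `x_j ≠ x₀`, a homomorphism from `F` to the wreath product `ℤ ≀ ℤ/n` induces a map
`R_n/R_n' → ℤ^(ℤ/n)` that reads off the coefficients of the generators with index `j` and turns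
`σ` into the shift. So a `σ`-invariant class has coefficients independent of `b`, and the
telescoping product `∏_{b<n} x₀^b x_j x₀^(-(b+1)) = x_j^n x₀^(-n)` puts it in the subgroup
generated by the classes of the `x_i^n`. Conversely `x₀ x_j^n x₀⁻¹ = u v` and `x_j^n = v u` with
`u = x₀ x_j^(n-1)` and `v = x_j x₀⁻¹` in `R_n`, so each class of `x_j^n` is `σ`-invariant.
-/

open Multiplicative SemidirectProduct

lemma Subgroup.closure_coe_preimage_eq_top {G : Type*} [Group G] {H : Subgroup G}
    {S : Set G} (h : H = Subgroup.closure S) : Subgroup.closure (((↑) : H → G) ⁻¹' S) = ⊤ := by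
  subst h
  exact Subgroup.closure_closure_coe_preimage

lemma SemidirectProduct.left_inr_mul_mul_inr {N G : Type*} [Group N] [Group G]
    {φ : G →* MulAut N} (g h : G) (x : N ⋊[φ] G) : (inr g * x * inr h).left = φ g x.left := by
  simp [mul_left]

namespace WindingKernel

variable {ι : Type*} {n : ℕ}

def winding : FreeGroup ι →* Multiplicative ℤ :=
  FreeGroup.lift fun _ => ofAdd 1

@[simp]
lemma winding_of (i : ι) : winding (FreeGroup.of i) = ofAdd 1 :=
  FreeGroup.lift_apply_of

variable (ι n) in
def windingMod : FreeGroup ι →* Multiplicative (ZMod n) :=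
  (Int.castAddHom (ZMod n)).toMultiplicative.comp winding

lemma eq_windingMod {α : FreeGroup ι →* Multiplicative (ZMod n)}
    (hα : ∀ i, α (FreeGroup.of i) = ofAdd 1) : α = windingMod ι n :=
  FreeGroup.ext_hom _ _ fun i => by simp [hα, windingMod]

variable (ι n) in
abbrev windingKer : Subgroup (FreeGroup ι) := (windingMod ι n).ker

lemma mem_windingKer {w : FreeGroup ι} :
    w ∈ windingKer ι n ↔ (n : ℤ) ∣ toAdd (winding w) := by
  rw [MonoidHom.mem_ker, ← ZMod.intCast_zmod_eq_zero_iff_dvd]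
  rfl

section Schreier

variable (i₀ : ι)

def schreierGen (j : ι) (b : ℤ) : FreeGroup ι :=
  FreeGroup.of i₀ ^ b * FreeGroup.of j * FreeGroup.of i₀ ^ (-(b + 1))

lemma zpow_mul_mul_zpow_mem_closure_schreierGen (w : FreeGroup ι) (b : ℤ) :
    FreeGroup.of i₀ ^ b * w * FreeGroup.of i₀ ^ (-(b + toAdd (winding w))) ∈
      Subgroup.closure (Set.range (Function.uncurry (schreierGen i₀))) := by
  induction w using FreeGroup.induction_on generalizing b with
  | C1 => simp
  | of j =>
    convert Subgroup.subset_closure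
      (Set.mem_range_self (f := Function.uncurry (schreierGen i₀)) (j, b)) using 1
    simp [schreierGen]
  | inv_of j ih =>
    convert inv_mem (ih (b - 1)) using 1
    simp only [map_inv, winding_of, toAdd_inv, toAdd_ofAdd]
    group
  | mul x y ihx ihy =>
    convert mul_mem (ihx b) (ihy (b + toAdd (winding x))) using 1
    simp only [map_mul, toAdd_mul]
    group

lemma windingKer_eq_closure :
    windingKer ι n = Subgroup.closure
      (Set.range (Function.uncurry (schreierGen i₀)) ∪ {FreeGroup.of i₀ ^ (n : ℤ)}) := by
  apply le_antisymm
  · intro w hw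
    obtain ⟨q, hq⟩ := mem_windingKer.1 hw
    have hw_eq : w = FreeGroup.of i₀ ^ (0 : ℤ) * w * FreeGroup.of i₀ ^ (-(0 + toAdd (winding w))) *
        (FreeGroup.of i₀ ^ (n : ℤ)) ^ q := by
      rw [hq, ← zpow_mul]; group
    rw [hw_eq]
    refine mul_mem (Subgroup.closure_mono Set.subset_union_left
        (zpow_mul_mul_zpow_mem_closure_schreierGen i₀ w 0)) (zpow_mem ?_ q)
    exact Subgroup.subset_closure (Set.mem_union_right _ rfl)
  · rw [Subgroup.closure_le]
    rintro _ (⟨⟨j, b⟩, rfl⟩ | rfl) <;> rw [SetLike.mem_coe, mem_windingKer] <;>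
      simp [schreierGen]

end Schreier

section Elements

variable (n) (i₀ : ι)

def powElt (i : ι) : windingKer ι n :=
  ⟨FreeGroup.of i ^ n, mem_windingKer.2 (by simp)⟩

def schreierElt (j : ι) (b : ℤ) : windingKer ι n :=
  ⟨schreierGen i₀ j b, mem_windingKer.2 (by simp [schreierGen])⟩

def schreierClass (j : ι) (b : ℤ) : Abelianization (windingKer ι n) :=
  Abelianization.of (schreierElt n i₀ j b)

lemma schreierClass_self (b : ℤ) : schreierClass n i₀ i₀ b = 1 := by
  have : schreierElt n i₀ i₀ b = 1 := Subtype.ext (by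
    simp only [schreierElt, schreierGen, OneMemClass.coe_one]
    group)
  rw [schreierClass, this, map_one]

lemma schreierClass_add_mul (j : ι) (b q : ℤ) :
    schreierClass n i₀ j (b + n * q) = schreierClass n i₀ j b := by
  have : schreierElt n i₀ j (b + n * q) =
      powElt n i₀ ^ q * schreierElt n i₀ j b * (powElt n i₀ ^ q)⁻¹ := Subtype.ext (by
    simp only [schreierElt, schreierGen, powElt, Subgroup.coe_mul, Subgroup.coe_inv,
      Subgroup.coe_zpow, ← zpow_natCast, ← zpow_mul]
    group)
  rw [schreierClass, this, map_mul, map_mul, map_inv, mul_inv_cancel_comm]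
  rfl

lemma schreierClass_val_intCast [NeZero n] (j : ι) (b : ℤ) :
    schreierClass n i₀ j ((b : ZMod n).val) = schreierClass n i₀ j b := by
  rw [ZMod.val_intCast, ← schreierClass_add_mul n i₀ j (b % n) (b / n), Int.emod_add_mul_ediv]

lemma prod_range_schreierClass (j : ι) (N : ℕ) :
    ∏ b ∈ Finset.range N, schreierClass n i₀ j b = Abelianization.of
      (⟨FreeGroup.of j ^ N * FreeGroup.of i₀ ^ (-N : ℤ), mem_windingKer.2 (by simp)⟩ :
        windingKer ι n) := by
  induction N with
  | zero => exact (map_one _).symm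
  | succ N ih =>
    rw [Finset.prod_range_succ, ih, schreierClass, ← map_mul]
    congr 1
    apply Subtype.ext
    simp only [schreierElt, schreierGen, Subgroup.coe_mul]
    push_cast
    group

lemma prod_schreierClass_val [NeZero n] (j : ι) :
    ∏ k : ZMod n, schreierClass n i₀ j k.val =
      Abelianization.of (powElt n j) * (Abelianization.of (powElt n i₀))⁻¹ := by
  rw [← map_inv, ← map_mul]
  have hval : ∏ k : ZMod n, schreierClass n i₀ j k.val =
      ∏ b ∈ Finset.range n, schreierClass n i₀ j b :=
    Finset.prod_nbij' (fun k => k.val) (fun b => (b : ZMod n)) (by simp [ZMod.val_lt]) (by simp)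
      (by simp) (fun b hb => ZMod.val_cast_of_lt (Finset.mem_range.1 hb)) (by simp)
  rw [hval, prod_range_schreierClass]
  congr 1
  apply Subtype.ext
  simp [powElt]

lemma closure_schreierClass_union_eq_top [NeZero n] :
    Subgroup.closure (Set.range (fun p : ι × ZMod n => schreierClass n i₀ p.1 p.2.val) ∪
      {Abelianization.of (powElt n i₀)}) = ⊤ := by
  rw [eq_top_iff, ← Subgroup.map_top_of_surjective (Abelianization.of : windingKer ι n →* _)
      (QuotientGroup.mk'_surjective _),
    ← Subgroup.closure_coe_preimage_eq_top (windingKer_eq_closure i₀), MonoidHom.map_closure,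
    Subgroup.closure_le]
  rintro _ ⟨a, ⟨⟨j, b⟩, hab⟩ | ha, rfl⟩
  · obtain rfl : schreierElt n i₀ j b = a := Subtype.ext hab
    exact Subgroup.subset_closure (Or.inl ⟨(j, b), schreierClass_val_intCast n i₀ j b⟩)
  · obtain rfl : powElt n i₀ = a := Subtype.ext (ha.trans (zpow_natCast _ _)).symm
    exact Subgroup.subset_closure (Or.inr rfl)

end Elements

section Conjugation

variable (n) (i₀ : ι)

def conjAb : Abelianization (windingKer ι n) →* Abelianization (windingKer ι n) :=
  Abelianization.map (MulAut.conjNormal (FreeGroup.of i₀)).toMonoidHom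

lemma conjAb_of (a : windingKer ι n) :
    conjAb n i₀ (Abelianization.of a) = Abelianization.of (MulAut.conjNormal (FreeGroup.of i₀) a) :=
  Abelianization.map_of _ _

lemma conjAb_powElt (j : ι) :
    conjAb n i₀ (Abelianization.of (powElt n j)) = Abelianization.of (powElt n j) := by
  let u : windingKer ι n := ⟨FreeGroup.of i₀ * FreeGroup.of j ^ ((n : ℤ) - 1),
    mem_windingKer.2 (by simp)⟩
  let v : windingKer ι n := ⟨FreeGroup.of j * (FreeGroup.of i₀)⁻¹, mem_windingKer.2 (by simp)⟩
  have huv : MulAut.conjNormal (FreeGroup.of i₀) (powElt n j) = u * v := Subtype.ext (by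
    simp only [MulAut.conjNormal_apply, powElt, Subgroup.coe_mul, u, v, ← zpow_natCast]
    group)
  have hvu : powElt n j = v * u := Subtype.ext (by
    simp only [powElt, Subgroup.coe_mul, u, v, ← zpow_natCast]
    group)
  rw [conjAb_of, huv, map_mul, mul_comm, ← map_mul, ← hvu]

lemma conjAb_eq_self_of_mem_closure {m : Abelianization (windingKer ι n)}
    (hm : m ∈ Subgroup.closure (Set.range fun i => Abelianization.of (powElt n i))) :
    conjAb n i₀ m = m :=
  (Subgroup.closure_le (MonoidHom.eqLocus (conjAb n i₀) (MonoidHom.id _))).2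
    (Set.range_subset_iff.2 (conjAb_powElt n i₀)) hm

end Conjugation

section Counting

variable (n)

def translate : Multiplicative (ZMod n) →* MulAut (Multiplicative (ZMod n → ℤ)) where
  toFun a := AddEquiv.toMultiplicative
    { toFun := fun f k => f (k - toAdd a)
      invFun := fun f k => f (k + toAdd a)
      left_inv := fun f => by simp
      right_inv := fun f => by simp
      map_add' := fun _ _ => rfl }
  map_one' := by
    ext x k
    simp
  map_mul' a b := by
    ext x k
    simp [sub_sub]

@[simp]
lemma toAdd_translate_apply (a : Multiplicative (ZMod n)) (x : Multiplicative (ZMod n → ℤ))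
    (k : ZMod n) : toAdd (translate n a x) k = toAdd x (k - toAdd a) := rfl

abbrev IntWreath := Multiplicative (ZMod n → ℤ) ⋊[translate n] Multiplicative (ZMod n)

variable {n}

lemma toAdd_apply_eq_apply_zero_of_translate_eq [NeZero n] {x : Multiplicative (ZMod n → ℤ)}
    (hx : translate n (ofAdd 1) x = x) (k : ZMod n) : toAdd x k = toAdd x 0 := by
  rw [← ZMod.natCast_zmod_val k]
  induction k.val with
  | zero => simp
  | succ a ih =>
    conv_lhs => rw [← hx]
    simpa using ih

variable [DecidableEq ι]

-- The lamp at `k` of `letterCount i w` counts, with signs, the letters `x_i` of `w` whose prefix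
-- has winding number `k` mod `n`.
def letterCount (i : ι) : FreeGroup ι →* IntWreath n :=
  FreeGroup.lift fun j => ⟨ofAdd (if j = i then Pi.single 0 1 else 0), ofAdd 1⟩

lemma letterCount_of (i j : ι) : letterCount (n := n) i (FreeGroup.of j) =
    ⟨ofAdd (if j = i then Pi.single 0 1 else 0), ofAdd 1⟩ :=
  FreeGroup.lift_apply_of

lemma letterCount_of_of_ne {i j : ι} (h : j ≠ i) :
    letterCount (n := n) i (FreeGroup.of j) = inr (ofAdd 1) := by
  simp [letterCount_of, h]

lemma letterCount_zpow_of_ne {i j : ι} (h : j ≠ i) (b : ℤ) :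
    letterCount (n := n) i (FreeGroup.of j ^ b) = inr (ofAdd (b : ZMod n)) := by
  rw [map_zpow, letterCount_of_of_ne h, ← map_zpow, ← ofAdd_zsmul, zsmul_one]

lemma right_letterCount (i : ι) (w : FreeGroup ι) :
    (letterCount i w).right = windingMod ι n w := by
  have : rightHom.comp (letterCount i) = windingMod ι n :=
    FreeGroup.ext_hom _ _ fun j => by simp [letterCount_of, windingMod]
  exact DFunLike.congr_fun this w

def count (i : ι) : windingKer ι n →* Multiplicative (ZMod n → ℤ) where
  toFun a := (letterCount i a.1).left
  map_one' := rfl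
  map_mul' a b := by
    simp [mul_left, right_letterCount, MonoidHom.mem_ker.1 a.2]

def countAb (i : ι) : Abelianization (windingKer ι n) →* Multiplicative (ZMod n → ℤ) :=
  Abelianization.lift (count i)

lemma countAb_of (i : ι) (a : windingKer ι n) :
    countAb i (Abelianization.of a) = (letterCount i a.1).left := rfl

variable {i₀ i : ι}

lemma countAb_conjAb (h : i₀ ≠ i) (m : Abelianization (windingKer ι n)) :
    countAb i (conjAb n i₀ m) = translate n (ofAdd 1) (countAb i m) := by
  have : (countAb i).comp (conjAb n i₀) = (translate n (ofAdd 1)).toMonoidHom.comp (countAb i) :=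
    Abelianization.hom_ext _ _ (MonoidHom.ext fun a => by
      simp [conjAb_of, countAb_of, letterCount_of_of_ne h, mul_left])
  exact DFunLike.congr_fun this m

lemma countAb_schreierClass (h : i₀ ≠ i) (j : ι) (b : ℤ) :
    countAb i (schreierClass n i₀ j b) = ofAdd (if j = i then Pi.single (b : ZMod n) 1 else 0) := by
  simp only [schreierClass, schreierElt, schreierGen, countAb_of, map_mul,
    letterCount_zpow_of_ne h, left_inr_mul_mul_inr, letterCount_of]
  ext k
  split_ifs <;> simp [Pi.single_apply, sub_eq_zero]

lemma countAb_powElt_base (h : i₀ ≠ i) : countAb i (Abelianization.of (powElt n i₀)) = 1 := by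
  rw [countAb_of, powElt]
  simp only [← zpow_natCast, letterCount_zpow_of_ne h, left_inr]

lemma toAdd_countAb_prod [Fintype ι] [NeZero n] (h : i₀ ≠ i) (c : ι × ZMod n → ℤ) :
    toAdd (countAb i (∏ p, schreierClass n i₀ p.1 p.2.val ^ c p)) = fun k => c (i, k) := by
  ext k
  simp [countAb_schreierClass h, Finset.sum_apply, ite_apply, Fintype.sum_prod_type,
    Pi.single_apply]

lemma coeff_eq_of_conjAb_eq_self [Fintype ι] [NeZero n] (h : i₀ ≠ i) (c : ι × ZMod n → ℤ)
    (d : ℤ) {m : Abelianization (windingKer ι n)}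
    (hm : m = (∏ p, schreierClass n i₀ p.1 p.2.val ^ c p) * Abelianization.of (powElt n i₀) ^ d)
    (hfix : conjAb n i₀ m = m) (k : ZMod n) : c (i, k) = c (i, 0) := by
  have hcount : countAb i m = countAb i (∏ p, schreierClass n i₀ p.1 p.2.val ^ c p) := by
    rw [hm, map_mul, map_zpow, countAb_powElt_base h, one_zpow, mul_one]
  have htranslate := countAb_conjAb h m
  rw [hfix, hcount] at htranslate
  have := toAdd_apply_eq_apply_zero_of_translate_eq htranslate.symm k
  rwa [toAdd_countAb_prod h] at this

end Counting

lemma mem_closure_powElt_of_conjAb_eq_self [Fintype ι] [NeZero n] (i₀ : ι)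
    {m : Abelianization (windingKer ι n)} (hm : conjAb n i₀ m = m) :
    m ∈ Subgroup.closure (Set.range fun i => Abelianization.of (powElt n i)) := by
  classical
  have hmem (i : ι) : Abelianization.of (powElt n i) ∈
      Subgroup.closure (Set.range fun i => Abelianization.of (powElt n i)) :=
    Subgroup.subset_closure (Set.mem_range_self i)
  have hgen := (closure_schreierClass_union_eq_top (n := n) i₀).symm ▸ Subgroup.mem_top m
  rw [Subgroup.closure_union, Subgroup.mem_sup] at hgen
  obtain ⟨y, hy, w, hw, rfl⟩ := hgen
  obtain ⟨d, rfl⟩ := Subgroup.mem_closure_singleton.1 hw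
  obtain ⟨c, rfl⟩ := Subgroup.exists_of_mem_closure_range _ _ hy
  have hrow j (hj : j ≠ i₀) k := coeff_eq_of_conjAb_eq_self (Ne.symm hj) c d rfl hm k
  refine mul_mem ?_ (zpow_mem (hmem i₀) d)
  rw [Fintype.prod_prod_type]
  refine Subgroup.prod_mem _ fun j _ => ?_
  by_cases hj : j = i₀
  · simp [hj, schreierClass_self]
  · rw [Finset.prod_congr rfl fun k _ => by rw [hrow j hj k], Finset.prod_zpow,
      prod_schreierClass_val]
    exact zpow_mem (mul_mem (hmem j) (inv_mem (hmem i₀))) _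

end WindingKernel

open WindingKernel in
/-- Let `R_n` be the kernel of the mod-n winding number map on `F_{s-1}`, with
the `ℤ/nℤ = ⟨σ⟩` action on `R_n/R_n'` induced by conjugation by `x₁` (the induced map `τ` on
the abelianization).  Then the subgroup of `σ`-invariant elements of `R_n/R_n'` is exactly the
subgroup generated by the classes of `x_i^n`, `1 ≤ i ≤ s-1`. -/
theorem stmt_12 (s n : ℕ) (hs : 3 ≤ s) (hn : 1 ≤ n)
    (αn : FreeGroup (Fin (s-1)) →* Multiplicative (ZMod n))
    (hα : ∀ i, αn (FreeGroup.of i) = Multiplicative.ofAdd 1)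
    (τ : Abelianization αn.ker →* Abelianization αn.ker)
    (hτ : ∀ a : αn.ker, τ (Abelianization.of a) =
      Abelianization.of (⟨FreeGroup.of (⟨0, by omega⟩ : Fin (s-1)) * ↑a *
          (FreeGroup.of (⟨0, by omega⟩ : Fin (s-1)))⁻¹,
        (MonoidHom.normal_ker αn).conj_mem ↑a a.2 _⟩ : αn.ker))
    (ξ : Fin (s-1) → αn.ker)
    (hξ : ∀ i, (ξ i : FreeGroup (Fin (s-1))) = FreeGroup.of i ^ n) :
    ∀ m : Abelianization αn.ker,
      τ m = m ↔ m ∈ Subgroup.closure (Set.range fun i => Abelianization.of (ξ i)) := by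
  have : NeZero n := ⟨by omega⟩
  obtain rfl := eq_windingMod hα
  obtain rfl : ξ = powElt n := funext fun i => Subtype.ext (hξ i)
  obtain rfl : τ = conjAb n ⟨0, by omega⟩ :=
    Abelianization.hom_ext _ _ (MonoidHom.ext fun a => (hτ a).trans (conjAb_of _ _ a).symm)
  exact fun m => ⟨mem_closure_powElt_of_conjAb_eq_self _, conjAb_eq_self_of_mem_closure n _⟩
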